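/- A nonempty finite intersection of quasi-Frank-and-Wolfe sets is a quasi-Frank-and-Wolfe set. -/

import Mathlib

open Pointwise

noncomputable section

/-- A quadratic function on a real vector space. -/
def IsQuadratic {E : Type*} [AddCommGroup E] [Module ℝ E] (f : E → ℝ) : Prop :=
  ∃ (B : E →ₗ[ℝ] E →ₗ[ℝ] ℝ) (l : E →ₗ[ℝ] ℝ) (c : ℝ), ∀ x, f x = B x x + l x + c

/-- A quasi-Frank-and-Wolfe set: a convex set on which every quadratic function
which is quasi-convex on the set and bounded below attains its infimum. -/
def IsQFWSet {E : Type*} [AddCommGroup E] [Module ℝ E] (F : Set E) : Prop :=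
  Convex ℝ F ∧ ∀ f : E → ℝ, IsQuadratic f →
    (∀ α : ℝ, Convex ℝ {x ∈ F | f x ≤ α}) → BddBelow (f '' F) →
    ∃ x₀ ∈ F, ∀ x ∈ F, f x₀ ≤ f x

/-!
qFW-sets are exactly the nonempty convex sets without asymptotes, i.e. without an affine flat that
misses the set at distance zero. A qFW-set has none, since the squared distance to such a flat would
not attain its infimum `0`. That a finite intersection of convex sets without asymptotes has none,
and that a quasi-convex quadratic bounded below attains its infimum on such a set, both go by
induction on the dimension of an ambient subspace. A bounded asymptotic (resp. minimizing) sequence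
contradicts closedness (resp. yields a minimum by compactness). An unbounded one has a limiting
direction `u` that recedes in every set (resp. in every sublevel set above the infimum, so that the
quadratic is constant along `u`). Projecting along `u` lowers the dimension, creates no asymptote
and, because `u` recedes in each of the finitely many sets, commutes with the intersection.
-/

open Filter Topology Set Bornology
open scoped RealInnerProductSpace

lemma eq_zero_of_forall_abs_mul_le {c M : ℝ} (h : ∀ t : ℝ, 1 ≤ t → |c| * t ≤ M) : c = 0 := by
  by_contra hc
  have hc' : 0 < |c| := abs_pos.mpr hc
  have := h (max 1 ((M + 1) / |c|)) (le_max_left _ _)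
  have := mul_le_mul_of_nonneg_left (le_max_right 1 ((M + 1) / |c|)) hc'.le
  rw [mul_div_cancel₀ _ hc'.ne'] at this
  linarith

lemma quadratic_coeffs_eq_zero_of_forall_abs_le {a b M : ℝ}
    (h : ∀ t : ℝ, 0 ≤ t → |b * t + a * t ^ 2| ≤ M) : a = 0 ∧ b = 0 := by
  have ha : a = 0 := eq_zero_of_forall_abs_mul_le (M := 3 * M) fun t ht => by
    -- `2 a t²` is the second difference `q (2 t) - 2 q t` of `q t = b t + a t²`
    have h1 := abs_le.mp (h t (by linarith))
    have h2 := abs_le.mp (h (2 * t) (by linarith))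
    have ht2 : t ≤ t ^ 2 := by nlinarith
    rcases abs_cases a with ⟨habs, ha⟩ | ⟨habs, ha⟩ <;> rw [habs]
    · nlinarith [mul_le_mul_of_nonneg_left ht2 ha]
    · nlinarith [mul_le_mul_of_nonneg_left ht2 (neg_nonneg.mpr ha.le)]
  subst ha
  refine ⟨rfl, eq_zero_of_forall_abs_mul_le (M := M) fun t ht => ?_⟩
  simpa [abs_mul, abs_of_nonneg (by linarith : (0 : ℝ) ≤ t)] using h t (by linarith)

section Quadratic

variable {E : Type*} [AddCommGroup E] [Module ℝ E] {f : E → ℝ}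

lemma IsQuadratic.exists_apply_add_smul (hf : IsQuadratic f) (u : E) :
    ∃ (a : ℝ) (g : E → ℝ), ∀ z (t : ℝ), f (z + t • u) = f z + g z * t + a * t ^ 2 := by
  obtain ⟨B, l, c, hf⟩ := hf
  refine ⟨B u u, fun z => B z u + B u z + l u, fun z t => ?_⟩
  simp only [hf, map_add, map_smul, LinearMap.add_apply, LinearMap.smul_apply, smul_eq_mul]
  ring

lemma IsQuadratic.apply_add_smul_eq_of_mem_Icc (hf : IsQuadratic f) {z u : E} {lo hi : ℝ}
    (h : ∀ t : ℝ, 0 ≤ t → f (z + t • u) ∈ Icc lo hi) (t : ℝ) : f (z + t • u) = f z := by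
  obtain ⟨a, g, hexp⟩ := hf.exists_apply_add_smul u
  obtain ⟨ha, hg⟩ := quadratic_coeffs_eq_zero_of_forall_abs_le (a := a) (b := g z)
      (M := |lo - f z| + |hi - f z|) fun t ht => by
    obtain ⟨hlo, hhi⟩ := h t ht
    rw [hexp] at hlo hhi
    rw [abs_le]
    constructor <;> linarith [neg_abs_le (lo - f z), le_abs_self (hi - f z), abs_nonneg (lo - f z),
      abs_nonneg (hi - f z)]
  simp [hexp, ha, hg]

end Quadratic

lemma IsQuadratic.continuous {E : Type*} [NormedAddCommGroup E] [NormedSpace ℝ E]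
    [FiniteDimensional ℝ E] {f : E → ℝ} (hf : IsQuadratic f) : Continuous f := by
  obtain ⟨B, l, c, hf⟩ := hf
  let B' : E →L[ℝ] E →L[ℝ] ℝ :=
    (LinearMap.toContinuousLinearMap.toLinearMap.comp B).toContinuousLinearMap
  have hB : Continuous fun x => B x x := B'.continuous.clm_apply continuous_id
  rw [show f = fun x => B x x + l x + c from funext hf]
  exact (hB.add l.continuous_of_finiteDimensional).add continuous_const

lemma isQuadratic_norm_sub_sq {E E' : Type*} [AddCommGroup E] [Module ℝ E]
    [NormedAddCommGroup E'] [InnerProductSpace ℝ E'] (T : E →ₗ[ℝ] E') (c : E') :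
    IsQuadratic fun z => ‖T z - c‖ ^ 2 := by
  refine ⟨(innerₗ E').compl₁₂ T T, -2 • (innerₗ E' c).comp T, ‖c‖ ^ 2, fun z => ?_⟩
  simp only [norm_sub_sq_real, LinearMap.compl₁₂_apply, innerₗ_apply_apply, LinearMap.smul_apply,
    LinearMap.comp_apply, real_inner_self_eq_norm_sq, real_inner_comm c]
  ring

lemma exists_isMinOn_of_isBounded_sublevel {E : Type*} [NormedAddCommGroup E] [ProperSpace E]
    {F : Set E} {f : E → ℝ} {β : ℝ} (hF : IsClosed F) (hf : Continuous f)
    (hne : {x ∈ F | f x ≤ β}.Nonempty) (hb : IsBounded {x ∈ F | f x ≤ β}) :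
    ∃ x₀ ∈ F, IsMinOn f F x₀ := by
  have hK : IsCompact {x ∈ F | f x ≤ β} :=
    Metric.isCompact_of_isClosed_isBounded (hF.inter (isClosed_le hf continuous_const)) hb
  obtain ⟨x₀, hx₀, hmin⟩ := hK.exists_isMinOn hne hf.continuousOn
  refine ⟨x₀, hx₀.1, fun z hz => ?_⟩
  by_cases hzβ : f z ≤ β
  · exact hmin ⟨hz, hzβ⟩
  · exact hx₀.2.trans (le_of_not_ge hzβ)

lemma exists_tendsto_norm_atTop_of_not_isBounded {E : Type*} [NormedAddCommGroup E] {F : Set E}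
    {f : E → ℝ} {μ : ℝ} (h : ∀ β, μ < β → ¬IsBounded {x ∈ F | f x ≤ β}) :
    ∃ x : ℕ → E, (∀ k, x k ∈ F) ∧ Tendsto (fun k => ‖x k‖) atTop atTop ∧
      ∀ β, μ < β → ∀ᶠ k in atTop, f (x k) ≤ β := by
  have hseq : ∀ k : ℕ, ∃ z ∈ F, f z ≤ μ + 1 / (k + 1) ∧ k < ‖z‖ := fun k => by
    have hk := h (μ + 1 / ((k : ℝ) + 1)) (lt_add_of_pos_right μ (by positivity))
    rw [isBounded_iff_forall_norm_le] at hk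
    push Not at hk
    obtain ⟨z, ⟨hz, hfz⟩, hzk⟩ := hk k
    exact ⟨z, hz, hfz, hzk⟩
  choose x hxF hfx hxk using hseq
  refine ⟨x, hxF, tendsto_atTop_mono (fun k => (hxk k).le) tendsto_natCast_atTop_atTop,
    fun β hβ => ?_⟩
  have hlim : Tendsto (fun k : ℕ => μ + 1 / ((k : ℝ) + 1)) atTop (𝓝 μ) := by
    simpa using tendsto_const_nhds.add (tendsto_one_div_add_atTop_nhds_zero_nat (𝕜 := ℝ))
  filter_upwards [hlim.eventually_lt_const hβ] with k hk using (hfx k).trans hk.le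

section Normed

variable {E : Type*} [NormedAddCommGroup E] [NormedSpace ℝ E]

def recessionCone (S : Set E) : Set E := {u | ∀ z ∈ S, ∀ t : ℝ, 0 ≤ t → z + t • u ∈ S}

lemma exists_tendsto_inv_norm_smul [FiniteDimensional ℝ E] {x : ℕ → E}
    (hx : Tendsto (fun k => ‖x k‖) atTop atTop) :
    ∃ u : E, ‖u‖ = 1 ∧ ∃ ψ : ℕ → ℕ, StrictMono ψ ∧
      Tendsto (fun k => ‖x (ψ k)‖⁻¹ • x (ψ k)) atTop (𝓝 u) := by
  have hsphere : ∀ᶠ k in atTop, ‖x k‖⁻¹ • x k ∈ Metric.sphere (0 : E) 1 := by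
    filter_upwards [hx.eventually_gt_atTop 0] with k hk
    rw [mem_sphere_zero_iff_norm, norm_smul, norm_inv, norm_norm, inv_mul_cancel₀ hk.ne']
  obtain ⟨u, hu, ψ, hψ, hlim⟩ := (isCompact_sphere (0 : E) 1).tendsto_subseq' hsphere.frequently
  exact ⟨u, mem_sphere_zero_iff_norm.mp hu, ψ, hψ, hlim⟩

lemma mem_recessionCone_of_tendsto {S : Set E} (hconv : Convex ℝ S) (hcl : IsClosed S)
    {x : ℕ → E} (hx : ∀ᶠ k in atTop, x k ∈ S) (hnorm : Tendsto (fun k => ‖x k‖) atTop atTop)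
    {u : E} (hu : Tendsto (fun k => ‖x k‖⁻¹ • x k) atTop (𝓝 u)) : u ∈ recessionCone S := by
  intro z hz t ht
  -- `z + t • u` is the limit of the points at distance `t` from `z` on the segments `[z, x k]`
  have hmem : ∀ᶠ k in atTop, (1 - t / ‖x k‖) • z + (t / ‖x k‖) • x k ∈ S := by
    filter_upwards [hx, hnorm.eventually_ge_atTop (t + 1)] with k hk hk1
    have h0 : 0 < ‖x k‖ := by linarith
    have h1 : t / ‖x k‖ ≤ 1 := by rw [div_le_one h0]; linarith
    exact hconv hz hk (sub_nonneg.mpr h1) (div_nonneg ht h0.le) (by ring)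
  have hs : Tendsto (fun k => t / ‖x k‖) atTop (𝓝 0) := tendsto_const_nhds.div_atTop hnorm
  have hlim : Tendsto (fun k => (1 - t / ‖x k‖) • z + (t / ‖x k‖) • x k) atTop
      (𝓝 ((1 - 0 : ℝ) • z + t • u)) := by
    refine ((tendsto_const_nhds.sub hs).smul_const z).add ?_
    simpa only [div_eq_mul_inv, mul_smul] using hu.const_smul t
  rw [sub_zero, one_smul] at hlim
  exact hcl.mem_of_tendsto hlim hmem

/-- The flat `a + U ⊆ W` is an asymptote of `F` inside `W`: it misses `F`, but the points
`x k ∈ F` and `b k ∈ a + U` approach each other. -/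
structure IsAsymptoteIn (W : Submodule ℝ E) (F : Set E) (a : E) (U : Submodule ℝ E)
    (x b : ℕ → E) : Prop where
  base_mem : a ∈ W
  direction_le : U ≤ W
  sub_notMem : ∀ z ∈ F, z - a ∉ U
  seq_mem : ∀ k, x k ∈ F
  sub_mem : ∀ k, b k - a ∈ U
  tendsto_sub : Tendsto (fun k => x k - b k) atTop (𝓝 0)

def HasAsymptoteIn (W : Submodule ℝ E) (F : Set E) : Prop :=
  ∃ a U x b, IsAsymptoteIn W F a U x b

variable {W U : Submodule ℝ E} {F : Set E} {a : E} {x b : ℕ → E}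

lemma IsAsymptoteIn.comp (h : IsAsymptoteIn W F a U x b) {ψ : ℕ → ℕ} (hψ : StrictMono ψ) :
    IsAsymptoteIn W F a U (x ∘ ψ) (b ∘ ψ) :=
  ⟨h.base_mem, h.direction_le, h.sub_notMem, fun k => h.seq_mem (ψ k), fun k => h.sub_mem (ψ k),
    h.tendsto_sub.comp hψ.tendsto_atTop⟩

lemma isClosed_of_not_hasAsymptoteIn [FiniteDimensional ℝ E] (hFW : F ⊆ W)
    (h : ¬HasAsymptoteIn W F) : IsClosed F := by
  refine isClosed_of_closure_subset fun p hp => by_contra fun hpF => h ?_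
  obtain ⟨x, hxF, hx⟩ := mem_closure_iff_seq_limit.mp hp
  refine ⟨p, ⊥, x, fun _ => p, W.closed_of_finiteDimensional.closure_subset_iff.mpr hFW hp,
    bot_le, fun z hz hzp => hpF ?_, hxF, fun _ => by simp, tendsto_sub_nhds_zero_iff.mpr hx⟩
  rwa [← sub_eq_zero.mp ((Submodule.mem_bot ℝ).mp hzp)]

lemma IsAsymptoteIn.tendsto_norm_atTop [FiniteDimensional ℝ E] (h : IsAsymptoteIn W F a U x b)
    (hF : IsClosed F) : Tendsto (fun k => ‖x k‖) atTop atTop := by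
  by_contra hx
  obtain ⟨C, hC⟩ : ∃ C, ∃ᶠ k in atTop, x k ∈ Metric.closedBall (0 : E) C := by
    rw [tendsto_atTop] at hx
    push Not at hx
    obtain ⟨C, hC⟩ := hx
    exact ⟨C, hC.mono fun k hk => by simpa using hk.le⟩
  obtain ⟨z, -, ψ, hψ, hz⟩ := (isCompact_closedBall (0 : E) C).tendsto_subseq' hC
  have hbz : Tendsto (fun k => b (ψ k) - a) atTop (𝓝 (z - a)) := by
    simpa using (hz.sub (h.comp hψ).tendsto_sub).sub_const a
  exact h.sub_notMem z (hF.mem_of_tendsto hz (.of_forall fun k => h.seq_mem _))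
    (U.closed_of_finiteDimensional.mem_of_tendsto hbz (.of_forall fun k => h.sub_mem _))

lemma IsAsymptoteIn.mem_of_tendsto_inv_norm_smul [FiniteDimensional ℝ E]
    (h : IsAsymptoteIn W F a U x b) (hnorm : Tendsto (fun k => ‖x k‖) atTop atTop) {u : E}
    (hu : Tendsto (fun k => ‖x k‖⁻¹ • x k) atTop (𝓝 u)) : u ∈ U := by
  have hsmall : Tendsto (fun k => ‖x k‖⁻¹ • (x k - b k + a)) atTop (𝓝 0) := by
    simpa using (tendsto_inv_atTop_zero.comp hnorm).smul (h.tendsto_sub.add_const a)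
  have hb : Tendsto (fun k => ‖x k‖⁻¹ • (b k - a)) atTop (𝓝 u) := by
    refine (sub_zero u ▸ hu.sub hsmall).congr fun k => ?_
    rw [← smul_sub]
    abel_nf
  exact U.closed_of_finiteDimensional.mem_of_tendsto hb
    (.of_forall fun k => U.smul_mem _ (h.sub_mem k))

end Normed

section InnerProduct

variable {E : Type*} [NormedAddCommGroup E] [InnerProductSpace ℝ E]

lemma sub_starProjection_orthogonal_singleton_mem (u x : E) :
    x - (ℝ ∙ u)ᗮ.starProjection x ∈ ℝ ∙ u := by
  rw [Submodule.starProjection_orthogonal_val, sub_sub_cancel]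
  exact Submodule.starProjection_apply_mem _ x

lemma starProjection_orthogonal_singleton_mem_inf {W : Submodule ℝ E} {u x : E} (hu : u ∈ W)
    (hx : x ∈ W) : (ℝ ∙ u)ᗮ.starProjection x ∈ W ⊓ (ℝ ∙ u)ᗮ := by
  refine ⟨?_, Submodule.starProjection_apply_mem _ x⟩
  have := sub_starProjection_orthogonal_singleton_mem u x
  rw [← sub_sub_cancel x ((ℝ ∙ u)ᗮ.starProjection x)]
  exact W.sub_mem hx ((Submodule.span_singleton_le_iff_mem u W).mpr hu this)

lemma finrank_inf_orthogonal_singleton_lt [FiniteDimensional ℝ E] {W : Submodule ℝ E} {u : E}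
    (hu : u ∈ W) (hu0 : u ≠ 0) :
    Module.finrank ℝ ↥(W ⊓ (ℝ ∙ u)ᗮ) < Module.finrank ℝ W := by
  refine Submodule.finrank_lt_finrank_of_lt (inf_lt_left.mpr fun hle => hu0 ?_)
  exact inner_self_eq_zero.mp (Submodule.mem_orthogonal_singleton_iff_inner_left.mp (hle hu))

variable {W U : Submodule ℝ E} {F : Set E} {a : E} {x b : ℕ → E}

lemma IsAsymptoteIn.image_starProjection (h : IsAsymptoteIn W F a U x b) {u : E} (hu : u ∈ U) :
    IsAsymptoteIn (W ⊓ (ℝ ∙ u)ᗮ) ((ℝ ∙ u)ᗮ.starProjection '' F) ((ℝ ∙ u)ᗮ.starProjection a)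
      (U.map (ℝ ∙ u)ᗮ.starProjection.toLinearMap) ((ℝ ∙ u)ᗮ.starProjection ∘ x)
      ((ℝ ∙ u)ᗮ.starProjection ∘ b) := by
  set P := (ℝ ∙ u)ᗮ.starProjection
  have huW := h.direction_le hu
  refine ⟨starProjection_orthogonal_singleton_mem_inf huW h.base_mem, ?_, ?_,
    fun k => mem_image_of_mem P (h.seq_mem k), fun k => ⟨b k - a, h.sub_mem k, map_sub P _ _⟩, ?_⟩
  · rintro _ ⟨w, hw, rfl⟩
    exact starProjection_orthogonal_singleton_mem_inf huW (h.direction_le hw)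
  · rintro _ ⟨z, hz, rfl⟩ ⟨w, hw, hPw⟩
    -- `z - a` and `w ∈ U` have the same projection, so they differ by a multiple of `u ∈ U`
    have hzaw : z - a - w ∈ ℝ ∙ u := by
      have h0 : P (z - a - w) = 0 := by rw [map_sub, map_sub, sub_eq_zero]; exact hPw.symm
      simpa only [show (ℝ ∙ u)ᗮ.starProjection (z - a - w) = 0 from h0, sub_zero] using
        sub_starProjection_orthogonal_singleton_mem u (z - a - w)
    refine h.sub_notMem z hz ?_
    simpa using U.add_mem ((Submodule.span_singleton_le_iff_mem u U).mpr hu hzaw) hw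
  · exact ((P.continuous.tendsto' 0 0 (map_zero P)).comp h.tendsto_sub).congr
      fun k => map_sub P (x k) (b k)

lemma HasAsymptoteIn.of_image_starProjection {u : E} (hu : u ∈ W)
    (h : HasAsymptoteIn (W ⊓ (ℝ ∙ u)ᗮ) ((ℝ ∙ u)ᗮ.starProjection '' F)) : HasAsymptoteIn W F := by
  obtain ⟨a, U, x, b, h⟩ := h
  set P := (ℝ ∙ u)ᗮ.starProjection
  choose y hyF hyx using h.seq_mem
  have hPV : ∀ v ∈ W ⊓ (ℝ ∙ u)ᗮ, P v = v := fun v hv =>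
    Submodule.starProjection_eq_self_iff.mpr hv.2
  refine ⟨a, U ⊔ ℝ ∙ u, y, fun k => b k + (y k - P (y k)), h.base_mem.1,
    sup_le (h.direction_le.trans inf_le_left) ((Submodule.span_singleton_le_iff_mem u W).mpr hu),
    fun z hz hza => ?_, hyF, fun k => ?_, ?_⟩
  · obtain ⟨w, hw, v, hv, hwv⟩ := Submodule.mem_sup.mp hza
    refine h.sub_notMem (P z) (mem_image_of_mem P hz) ?_
    have hPv : P v = 0 := Submodule.starProjection_orthogonal_apply_eq_zero hv
    rwa [← hPV a h.base_mem, ← map_sub, ← hwv, map_add, hPv, add_zero,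
      hPV w (h.direction_le hw)]
  · rw [add_sub_right_comm]
    exact add_mem (Submodule.mem_sup_left (h.sub_mem k))
      (Submodule.mem_sup_right (sub_starProjection_orthogonal_singleton_mem u (y k)))
  · refine h.tendsto_sub.congr fun k => ?_
    rw [← hyx k]
    abel

theorem IsQFWSet.not_hasAsymptoteIn [FiniteDimensional ℝ E] (hF : IsQFWSet F) :
    ¬HasAsymptoteIn W F := by
  rintro ⟨a, U, x, b, h⟩
  set T := Uᗮ.starProjection
  have hT : ∀ v, T v = 0 ↔ v ∈ U := fun v => by
    change v ∈ (T : E →ₗ[ℝ] E).ker ↔ v ∈ U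
    rw [Submodule.ker_starProjection, U.orthogonal_orthogonal]
  -- the squared distance to the flat `a + U`: convex, positive on `F`, with infimum `0` on `F`
  set f : E → ℝ := fun z => ‖T z - T a‖ ^ 2
  have hfconv : ConvexOn ℝ univ f :=
    (convexOn_univ_norm.comp_affineMap
      (T.toLinearMap.toAffineMap - AffineMap.const ℝ E (T a))).pow (fun _ _ => norm_nonneg _) 2
  obtain ⟨x₀, hx₀, hmin⟩ := hF.2 f (isQuadratic_norm_sub_sq T.toLinearMap (T a))
    (hfconv.subset (subset_univ F) hF.1).quasiconvexOn ⟨0, by rintro _ ⟨z, -, rfl⟩; positivity⟩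
  have hpos : 0 < f x₀ := by
    have : T x₀ - T a ≠ 0 := by
      rw [← map_sub, Ne, hT]
      exact h.sub_notMem x₀ hx₀
    positivity
  have hlim : Tendsto (fun k => f (x k)) atTop (𝓝 0) := by
    have hfx : ∀ k, f (x k) = ‖T (x k - b k)‖ ^ 2 := fun k => by
      change ‖T (x k) - T a‖ ^ 2 = _
      rw [← map_sub, ← sub_add_sub_cancel (x k) (b k) a, map_add, (hT _).mpr (h.sub_mem k),
        add_zero]
    simpa [hfx] using ((T.continuous.tendsto 0).comp h.tendsto_sub).norm.pow 2
  obtain ⟨k, hk⟩ := (hlim.eventually (gt_mem_nhds hpos)).exists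
  exact (hmin (x k) (h.seq_mem k)).not_gt hk

lemma iInter_image_starProjection_eq {ι : Type*} [Finite ι] [Nonempty ι] {F : ι → Set E} {u : E}
    (hu : ∀ i, u ∈ recessionCone (F i)) :
    ⋂ i, (ℝ ∙ u)ᗮ.starProjection '' F i = (ℝ ∙ u)ᗮ.starProjection '' ⋂ i, F i := by
  refine Subset.antisymm (fun p hp => ?_) (image_iInter_subset F _)
  choose y hyF hyp using mem_iInter.mp hp
  obtain ⟨c, hc⟩ : ∃ c : ι → ℝ, ∀ i, y i = p + c i • u := by
    choose c hc using fun i =>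
      Submodule.mem_span_singleton.mp (sub_starProjection_orthogonal_singleton_mem u (y i))
    exact ⟨c, fun i => by rw [hc i, ← hyp i, add_sub_cancel]⟩
  -- shifting every `y i` along `u` to the largest offset gives a common preimage of `p`
  obtain ⟨j, hj⟩ := Finite.exists_max c
  refine ⟨y j, mem_iInter.mpr fun i => ?_, hyp j⟩
  have : y j = y i + (c j - c i) • u := by rw [hc i, hc j, sub_smul]; abel
  exact this ▸ hu i _ (hyF i) _ (sub_nonneg.mpr (hj i))

theorem not_hasAsymptoteIn_iInter [FiniteDimensional ℝ E] {ι : Type*} [Finite ι]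
    (W : Submodule ℝ E) (F : ι → Set E) (hFW : ∀ i, F i ⊆ W) (hFc : ∀ i, Convex ℝ (F i))
    (hF : ∀ i, ¬HasAsymptoteIn W (F i)) : ¬HasAsymptoteIn W (⋂ i, F i) := by
  induction hN : Module.finrank ℝ W using Nat.strong_induction_on generalizing W F with
  | _ N IH =>
  rintro ⟨a, U, x, b, h⟩
  rcases isEmpty_or_nonempty ι with hι | hι
  · exact h.sub_notMem a (by simp) (by simp)
  have hcl : ∀ i, IsClosed (F i) := fun i => isClosed_of_not_hasAsymptoteIn (hFW i) (hF i)
  have hx := h.tendsto_norm_atTop (isClosed_iInter hcl)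
  obtain ⟨u, hu1, ψ, hψ, hdir⟩ := exists_tendsto_inv_norm_smul hx
  have hxψ := hx.comp hψ.tendsto_atTop
  have huU : u ∈ U := (h.comp hψ).mem_of_tendsto_inv_norm_smul hxψ hdir
  have huW := h.direction_le huU
  have hrec : ∀ i, u ∈ recessionCone (F i) := fun i =>
    mem_recessionCone_of_tendsto (hFc i) (hcl i)
      (.of_forall fun k => mem_iInter.mp (h.seq_mem (ψ k)) i) hxψ hdir
  refine IH _ (hN ▸ finrank_inf_orthogonal_singleton_lt huW (norm_ne_zero_iff.mp (by simp [hu1])))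
    (W ⊓ (ℝ ∙ u)ᗮ) (fun i => (ℝ ∙ u)ᗮ.starProjection '' F i) (fun i => ?_)
    (fun i => (hFc i).linear_image _) (fun i hi => hF i (hi.of_image_starProjection huW)) rfl ?_
  · rintro _ ⟨z, hz, rfl⟩
    exact starProjection_orthogonal_singleton_mem_inf huW (hFW i hz)
  · rw [iInter_image_starProjection_eq hrec]
    exact ⟨_, _, _, _, h.image_starProjection huU⟩

lemma QuasiconvexOn.image_of_comp_eq {f : E → ℝ} (hf : QuasiconvexOn ℝ F f)
    (g : E →ₗ[ℝ] E) (hfg : ∀ z ∈ F, f (g z) = f z) : QuasiconvexOn ℝ (g '' F) f := by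
  intro α
  convert (hf α).linear_image g using 1
  ext p
  constructor
  · rintro ⟨⟨z, hz, rfl⟩, hp⟩
    exact ⟨z, ⟨hz, hfg z hz ▸ hp⟩, rfl⟩
  · rintro ⟨z, ⟨hz, hfz⟩, rfl⟩
    exact ⟨⟨z, hz, rfl⟩, (hfg z hz).symm ▸ hfz⟩

lemma IsQuadratic.apply_starProjection_eq {f : E → ℝ} (hf : IsQuadratic f) {μ : ℝ}
    (hμ : ∀ z ∈ F, μ ≤ f z) {u : E} (hu : ∀ β, μ < β → u ∈ recessionCone {x ∈ F | f x ≤ β})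
    {z : E} (hz : z ∈ F) : f ((ℝ ∙ u)ᗮ.starProjection z) = f z := by
  have hconst := hf.apply_add_smul_eq_of_mem_Icc (z := z) (u := u) (lo := μ)
    (hi := max (f z) (μ + 1)) fun t ht => by
      have := hu _ ((lt_add_one μ).trans_le (le_max_right _ _)) z ⟨hz, le_max_left _ _⟩ t ht
      exact ⟨hμ _ this.1, this.2⟩
  obtain ⟨c, hc⟩ :=
    Submodule.mem_span_singleton.mp (sub_starProjection_orthogonal_singleton_mem u z)
  rw [show (ℝ ∙ u)ᗮ.starProjection z = z + (-c) • u by rw [neg_smul, hc]; abel, hconst]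

theorem exists_isMinOn_of_not_hasAsymptoteIn [FiniteDimensional ℝ E] (W : Submodule ℝ E)
    (F : Set E) (hFW : F ⊆ W) (hFc : Convex ℝ F) (hFne : F.Nonempty) (hF : ¬HasAsymptoteIn W F)
    {f : E → ℝ} (hf : IsQuadratic f) (hfq : QuasiconvexOn ℝ F f) (hbdd : BddBelow (f '' F)) :
    ∃ x₀ ∈ F, IsMinOn f F x₀ := by
  induction hN : Module.finrank ℝ W using Nat.strong_induction_on generalizing W F with
  | _ N IH =>
  have hcl := isClosed_of_not_hasAsymptoteIn hFW hF
  have hμ : ∀ z ∈ F, sInf (f '' F) ≤ f z := fun z hz => csInf_le hbdd (mem_image_of_mem f hz)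
  by_cases hbd : ∃ β, sInf (f '' F) < β ∧ IsBounded {x ∈ F | f x ≤ β}
  · obtain ⟨β, hβ, hb⟩ := hbd
    obtain ⟨_, ⟨z, hz, rfl⟩, hzβ⟩ := exists_lt_of_csInf_lt (hFne.image f) hβ
    exact exists_isMinOn_of_isBounded_sublevel hcl hf.continuous ⟨z, hz, hzβ.le⟩ hb
  push Not at hbd
  obtain ⟨x, hxF, hx, hfx⟩ := exists_tendsto_norm_atTop_of_not_isBounded hbd
  obtain ⟨u, hu1, ψ, hψ, hdir⟩ := exists_tendsto_inv_norm_smul hx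
  have huW : u ∈ W := W.closed_of_finiteDimensional.mem_of_tendsto hdir
    (.of_forall fun k => W.smul_mem _ (hFW (hxF _)))
  have hrec : ∀ β, sInf (f '' F) < β → u ∈ recessionCone {x ∈ F | f x ≤ β} := fun β hβ =>
    mem_recessionCone_of_tendsto (hfq β) (hcl.inter (isClosed_le hf.continuous continuous_const))
      ((hψ.tendsto_atTop.eventually (hfx β hβ)).mono fun k hk => ⟨hxF _, hk⟩)
      (hx.comp hψ.tendsto_atTop) hdir
  set P := (ℝ ∙ u)ᗮ.starProjection
  have hfP : ∀ z ∈ F, f (P z) = f z := fun z hz => hf.apply_starProjection_eq hμ hrec hz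
  obtain ⟨_, ⟨z₀, hz₀, rfl⟩, hmin⟩ := IH _
    (hN ▸ finrank_inf_orthogonal_singleton_lt huW (norm_ne_zero_iff.mp (by simp [hu1])))
    (W ⊓ (ℝ ∙ u)ᗮ) (P '' F) (image_subset_iff.mpr fun z hz =>
      starProjection_orthogonal_singleton_mem_inf huW (hFW hz)) (hFc.linear_image P.toLinearMap)
    (hFne.image P) (fun h => hF (h.of_image_starProjection huW))
    (hfq.image_of_comp_eq P.toLinearMap hfP) (by rwa [image_image, image_congr hfP]) rfl
  refine ⟨z₀, hz₀, isMinOn_iff.mpr fun z hz => ?_⟩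
  simpa only [hfP z hz, hfP z₀ hz₀] using isMinOn_iff.mp hmin _ (mem_image_of_mem P hz)

theorem IsQFWSet.of_not_hasAsymptoteIn_top [FiniteDimensional ℝ E] (hFc : Convex ℝ F)
    (hne : F.Nonempty) (hF : ¬HasAsymptoteIn ⊤ F) : IsQFWSet F := by
  refine ⟨hFc, fun f hf hfq hbdd => ?_⟩
  obtain ⟨x₀, hx₀, hmin⟩ :=
    exists_isMinOn_of_not_hasAsymptoteIn ⊤ F (fun _ _ => trivial) hFc hne hF hf hfq hbdd
  exact ⟨x₀, hx₀, isMinOn_iff.mp hmin⟩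

end InnerProduct

theorem qFW_finite_intersection {n m : ℕ}
    (F : Fin m → Set (EuclideanSpace ℝ (Fin n)))
    (hF : ∀ i, IsQFWSet (F i)) (hne : (⋂ i, F i).Nonempty) :
    IsQFWSet (⋂ i, F i) :=
  IsQFWSet.of_not_hasAsymptoteIn_top (convex_iInter fun i => (hF i).1) hne
    (not_hasAsymptoteIn_iInter ⊤ F (fun _ _ _ => trivial) (fun i => (hF i).1)
      fun i => (hF i).not_hasAsymptoteIn)
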